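/- arXiv:2006.16222 — 3 statements merged into one kernel-verified Lean document; each statement's English description precedes it below -/
import Mathlib

section
/- Suppose v ∈ V is a vertex whose neighborhood N(v) contains both vertices of some terminal pair {s,t} ∈ B. Then every node multicut M of (G,B) contains v, and moreover M is a minimal node multicut of (G,B) if and only if M \ {v} is a minimal node multicut of (G − {v}, B). -/
open SimpleGraph Set

variable {V : Type*}

/-- The set of terminals occurring in a set `B` of terminal pairs. -/
def terminalSet (B : Set (V × V)) : Set V := {v | ∃ p ∈ B, v = p.1 ∨ v = p.2}

/-- `s` and `t` are separated in `G - M` (the graph obtained by deleting the vertices of `M`). -/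
def SepSets (G : SimpleGraph V) (M : Set V) (s t : V) : Prop :=
  ∀ (hs : s ∈ (Mᶜ : Set V)) (ht : t ∈ (Mᶜ : Set V)),
    ¬ (G.induce (Mᶜ : Set V)).Reachable ⟨s, hs⟩ ⟨t, ht⟩

/-- `M` is a node multicut of `(G, B)`. -/
def IsNodeMulticut (G : SimpleGraph V) (B : Set (V × V)) (M : Set V) : Prop :=
  M ⊆ (terminalSet B)ᶜ ∧ ∀ p ∈ B, SepSets G M p.1 p.2

/-- `M` is a minimal node multicut of `(G, B)`. -/
def IsMinNodeMulticut (G : SimpleGraph V) (B : Set (V × V)) (M : Set V) : Prop :=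
  IsNodeMulticut G B M ∧ ∀ M' ⊂ M, ¬ IsNodeMulticut G B M'

/-- `C` is (the vertex set of) a connected component of `G - M`. -/
def IsCompOf (G : SimpleGraph V) (M : Set V) (C : Set V) : Prop :=
  ∃ c : (G.induce (Mᶜ : Set V)).ConnectedComponent, C = Subtype.val '' c.supp

/-- The graph `G - {v}` obtained by deleting the vertex `v` (here `v` is kept as an
isolated vertex, which does not affect multicuts). -/
def deleteVertex (G : SimpleGraph V) (v : V) : SimpleGraph V where
  Adj a b := G.Adj a b ∧ a ≠ v ∧ b ≠ v
  symm := ⟨fun a b ⟨h, ha, hb⟩ => ⟨h.symm, hb, ha⟩⟩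
  loopless := ⟨fun a h => G.loopless.irrefl a h.1⟩

/-!
A set `M` separates `s` from `t` exactly when every `s`–`t` walk of `G` meets `M`. The walks of
`G - v` that start at a vertex other than `v` are the walks of `G` avoiding `v`, so for `v ∈ M`
the set `M` is a multicut of `G` iff `M \ {v}` is a multicut of `G - v`. The walk `s, v, t` forces
`v` into every multicut of `G`, and minimality then passes back and forth along `M ↦ M \ {v}`,
whose inverse is `M' ↦ insert v M'`.
-/

theorem deleteVertex_adj {G : SimpleGraph V} {v a b : V} :
    (deleteVertex G v).Adj a b ↔ G.Adj a b ∧ a ≠ v ∧ b ≠ v :=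
  Iff.rfl

theorem deleteVertex_le (G : SimpleGraph V) (v : V) : deleteVertex G v ≤ G := fun _ _ h => h.1

namespace SimpleGraph

variable {G : SimpleGraph V}

theorem induce_reachable_iff_exists_walk {s : Set V} {u w : V} (hu : u ∈ s) (hw : w ∈ s) :
    (G.induce s).Reachable ⟨u, hu⟩ ⟨w, hw⟩ ↔ ∃ p : G.Walk u w, ∀ x ∈ p.support, x ∈ s := by
  constructor
  · rintro ⟨q⟩
    refine ⟨q.map (Embedding.induce s).toHom, fun x hx => ?_⟩
    have hx' : x ∈ q.support.map (Embedding.induce s).toHom := Walk.support_map _ q ▸ hx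
    obtain ⟨y, -, rfl⟩ := List.mem_map.1 hx'
    exact y.2
  · rintro ⟨p, hp⟩
    exact ⟨p.induce s hp⟩

theorem Walk.notMem_support_of_deleteVertex {v s t : V} (p : (deleteVertex G v).Walk s t)
    (hs : s ≠ v) : v ∉ p.support := by
  induction p with
  | nil => simpa [eq_comm] using hs
  | cons h _ ih => simpa [Ne.symm hs] using ih h.2.2

theorem Walk.exists_deleteVertex_support_eq {v s t : V} (p : G.Walk s t) (hp : v ∉ p.support) :
    ∃ q : (deleteVertex G v).Walk s t, q.support = p.support := by
  induction p with
  | nil => exact ⟨.nil, rfl⟩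
  | cons h p ih =>
    simp only [Walk.support_cons, List.mem_cons, not_or] at hp
    obtain ⟨q, hq⟩ := ih hp.2
    have hnext : _ ≠ v := fun h => hp.2 (h ▸ p.start_mem_support)
    exact ⟨.cons (deleteVertex_adj.2 ⟨h, Ne.symm hp.1, hnext⟩) q, by simp [hq]⟩

end SimpleGraph

theorem sepSets_iff_forall_walk {G : SimpleGraph V} {M : Set V} {s t : V} :
    SepSets G M s t ↔ ∀ p : G.Walk s t, ∃ x ∈ p.support, x ∈ M := by
  simp only [SepSets, induce_reachable_iff_exists_walk]
  constructor
  · intro h p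
    by_contra! hp
    exact h (hp s p.start_mem_support) (hp t p.end_mem_support) ⟨p, hp⟩
  · rintro h - - ⟨p, hp⟩
    obtain ⟨x, hx, hxM⟩ := h p
    exact hp x hx hxM

theorem sepSets_deleteVertex_iff {G : SimpleGraph V} {M : Set V} {v s t : V} (hvM : v ∈ M)
    (hs : s ≠ v) : SepSets (deleteVertex G v) (M \ {v}) s t ↔ SepSets G M s t := by
  simp only [sepSets_iff_forall_walk]
  constructor
  · intro h p
    by_cases hvp : v ∈ p.support
    · exact ⟨v, hvp, hvM⟩
    obtain ⟨q, hq⟩ := p.exists_deleteVertex_support_eq hvp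
    obtain ⟨x, hx, hxM, -⟩ := h q
    exact ⟨x, hq ▸ hx, hxM⟩
  · intro h q
    obtain ⟨x, hx, hxM⟩ := h (q.mapLe (deleteVertex_le G v))
    rw [Walk.support_mapLe_eq_support] at hx
    exact ⟨x, hx, hxM, fun hxv => q.notMem_support_of_deleteVertex hs (hxv ▸ hx)⟩

theorem fst_mem_terminalSet {B : Set (V × V)} {p : V × V} (hp : p ∈ B) :
    p.1 ∈ terminalSet B :=
  ⟨p, hp, Or.inl rfl⟩

theorem snd_mem_terminalSet {B : Set (V × V)} {p : V × V} (hp : p ∈ B) :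
    p.2 ∈ terminalSet B :=
  ⟨p, hp, Or.inr rfl⟩

theorem IsNodeMulticut.mem_of_adj_of_adj {G : SimpleGraph V} {B : Set (V × V)} {M : Set V}
    (hM : IsNodeMulticut G B M) {p : V × V} (hp : p ∈ B) {v : V} (h₁ : G.Adj v p.1)
    (h₂ : G.Adj v p.2) : v ∈ M := by
  obtain ⟨x, hx, hxM⟩ :=
    sepSets_iff_forall_walk.1 (hM.2 p hp) (.cons h₁.symm (.cons h₂ .nil))
  simp only [Walk.support_cons, Walk.support_nil, List.mem_cons, List.not_mem_nil,
    or_false] at hx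
  rcases hx with rfl | rfl | rfl
  · exact absurd (fst_mem_terminalSet hp) (hM.1 hxM)
  · exact hxM
  · exact absurd (snd_mem_terminalSet hp) (hM.1 hxM)

theorem isNodeMulticut_deleteVertex_iff {G : SimpleGraph V} {B : Set (V × V)} {M : Set V}
    {v : V} (hv : v ∉ terminalSet B) (hvM : v ∈ M) :
    IsNodeMulticut (deleteVertex G v) B (M \ {v}) ↔ IsNodeMulticut G B M := by
  have hne : ∀ p ∈ B, p.1 ≠ v := fun p hp h => hv (h ▸ fst_mem_terminalSet hp)
  rw [IsNodeMulticut, IsNodeMulticut, sdiff_singleton_subset_iff, insert_eq_of_mem hv]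
  exact and_congr_right fun _ =>
    forall₂_congr fun p hp => sepSets_deleteVertex_iff hvM (hne p hp)

theorem isMinNodeMulticut_iff_minimal {G : SimpleGraph V} {B : Set (V × V)} {M : Set V} :
    IsMinNodeMulticut G B M ↔ Minimal (IsNodeMulticut G B) M :=
  minimal_iff_forall_lt.symm

theorem minimal_sdiff_singleton_iff {α : Type*} {P Q : Set α → Prop} {a : α}
    (hP : ∀ s, P s → a ∈ s) (hPQ : ∀ s, a ∈ s → (Q (s \ {a}) ↔ P s)) {s : Set α}
    (hs : a ∈ s) : Minimal Q (s \ {a}) ↔ Minimal P s := by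
  constructor
  · rintro ⟨hQs, hmin⟩
    refine ⟨(hPQ s hs).1 hQs, fun t hPt hts => ?_⟩
    have hst := hmin ((hPQ t (hP t hPt)).2 hPt) (sdiff_subset_sdiff_left hts)
    rw [← insert_eq_of_mem (hP t hPt), ← sdiff_singleton_subset_iff]
    exact hst.trans sdiff_subset
  · rintro ⟨hPs, hmin⟩
    refine ⟨(hPQ s hs).2 hPs, fun t hQt hts => ?_⟩
    have hat : a ∉ t := fun h => (hts h).2 rfl
    have hPt : P (insert a t) := (hPQ _ (mem_insert a t)).1 (by simpa [hat] using hQt)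
    exact sdiff_singleton_subset_iff.2 (hmin hPt (insert_subset hs (hts.trans sdiff_subset)))

/-- If the neighborhood of a vertex `v` contains both vertices of some
terminal pair of `B`, then every node multicut of `(G, B)` contains `v`, and moreover a set
`M` containing `v` is a minimal node multicut of `(G, B)` if and only if `M \ {v}` is a
minimal node multicut of `(G - {v}, B)`. -/
theorem node_multicut_delete_dominating_vertex (G : SimpleGraph V) (B : Set (V × V))
    (v : V) (hv : v ∉ terminalSet B)
    (hpair : ∃ p ∈ B, G.Adj v p.1 ∧ G.Adj v p.2) :
    (∀ M : Set V, IsNodeMulticut G B M → v ∈ M) ∧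
    (∀ M : Set V, v ∈ M →
      (IsMinNodeMulticut G B M ↔ IsMinNodeMulticut (deleteVertex G v) B (M \ {v}))) := by
  obtain ⟨p, hp, h₁, h₂⟩ := hpair
  have hmem : ∀ M, IsNodeMulticut G B M → v ∈ M := fun M hM => hM.mem_of_adj_of_adj hp h₁ h₂
  refine ⟨hmem, fun M hvM => ?_⟩
  rw [isMinNodeMulticut_iff_minimal, isMinNodeMulticut_iff_minimal]
  exact (minimal_sdiff_singleton_iff hmem
    (fun _ => isNodeMulticut_deleteVertex_iff hv) hvM).symm
end

section
/- A node multiway cut M ⊆ V \ T of (G,T) with T = {t₁,…,t_k} is minimal if and only if there exist k connected components C₁,…,C_k of G − M such that (1) t_i ∈ C_i for each i, and (2) for every v ∈ M there exist indices i < j with N(v) ∩ C_i ≠ ∅ and N(v) ∩ C_j ≠ ∅. -/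
/-! If `M` is minimal and `v ∈ M`, then `M \ {v}` is no longer a cut, so some walk joins two
distinct terminals while avoiding `M \ {v}`. It must pass through `v`, and its stretches before
the first and after the last visit to `v` avoid `M`, so the neighbours of `v` ending these
stretches lie in the components of `G - M` of the two terminals. Conversely, if `v ∈ M` has
neighbours in the components of `tᵢ` and `tⱼ`, then `tᵢ ⋯ v ⋯ tⱼ` joins these terminals in
`G - M'` for every `M' ⊂ M` with `v ∉ M'`. -/

open SimpleGraph Set

variable {V : Type*}

/-- `M` is a node multiway cut of `(G, T)`: a set of non-terminal vertices whose removal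
disconnects every pair of distinct terminals. -/
def IsNodeMultiwayCut (G : SimpleGraph V) (T : Set V) (M : Set V) : Prop :=
  M ⊆ Tᶜ ∧ ∀ s ∈ T, ∀ u ∈ T, s ≠ u → SepSets G M s u

/-- `M` is a minimal node multiway cut of `(G, T)`. -/
def IsMinNodeMultiwayCut (G : SimpleGraph V) (T : Set V) (M : Set V) : Prop :=
  IsNodeMultiwayCut G T M ∧ ∀ M' ⊂ M, ¬ IsNodeMultiwayCut G T M'

def ReachableAvoiding (G : SimpleGraph V) (M : Set V) (x y : V) : Prop :=
  ∃ (hx : x ∈ (Mᶜ : Set V)) (hy : y ∈ (Mᶜ : Set V)),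
    (G.induce (Mᶜ : Set V)).Reachable ⟨x, hx⟩ ⟨y, hy⟩

section ReachableAvoiding

variable {G : SimpleGraph V} {M M' : Set V} {v x y z : V}

theorem sepSets_iff_not_reachableAvoiding : SepSets G M x y ↔ ¬ ReachableAvoiding G M x y := by
  simp only [SepSets, ReachableAvoiding, not_exists]

theorem reachableAvoiding_iff_exists_walk :
    ReachableAvoiding G M x y ↔ ∃ w : G.Walk x y, ∀ z ∈ w.support, z ∉ M := by
  constructor
  · rintro ⟨_, _, ⟨p⟩⟩
    refine ⟨p.map (Embedding.induce _).toHom, fun z hz => ?_⟩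
    obtain ⟨z, -, rfl⟩ := List.mem_map.1 ((Walk.support_map _ _) ▸ hz)
    exact z.2
  · rintro ⟨w, hw⟩
    exact ⟨_, _, ⟨w.induce Mᶜ hw⟩⟩

theorem ReachableAvoiding.refl (hx : x ∉ M) : ReachableAvoiding G M x x :=
  ⟨hx, hx, .refl _⟩

theorem ReachableAvoiding.symm (h : ReachableAvoiding G M x y) : ReachableAvoiding G M y x :=
  let ⟨hx, hy, hxy⟩ := h
  ⟨hy, hx, hxy.symm⟩

theorem ReachableAvoiding.trans (hxy : ReachableAvoiding G M x y)
    (hyz : ReachableAvoiding G M y z) : ReachableAvoiding G M x z :=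
  let ⟨hx, _, hxy⟩ := hxy
  let ⟨_, hz, hyz⟩ := hyz
  ⟨hx, hz, hxy.trans hyz⟩

theorem ReachableAvoiding.mono (hM : M' ⊆ M) (h : ReachableAvoiding G M x y) :
    ReachableAvoiding G M' x y :=
  let ⟨hx, hy, hxy⟩ := h
  ⟨fun h => hx (hM h), fun h => hy (hM h),
    hxy.map (G.induceHomOfLE (compl_subset_compl.2 hM)).toHom⟩

theorem SimpleGraph.Adj.reachableAvoiding (hxy : G.Adj x y) (hx : x ∉ M) (hy : y ∉ M) :
    ReachableAvoiding G M x y :=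
  ⟨hx, hy, Adj.reachable hxy⟩

/-- `a` is the vertex preceding the first visit of `w` to `v`. -/
theorem SimpleGraph.Walk.exists_adj_reachableAvoiding_of_mem_support (w : G.Walk x y)
    (hw : ∀ z ∈ w.support, z ∉ M \ {v}) (hx : x ∉ M) (hvM : v ∈ M) (hv : v ∈ w.support) :
    ∃ a, G.Adj v a ∧ ReachableAvoiding G M x a := by
  induction w with
  | nil => exact absurd (List.mem_singleton.1 hv ▸ hvM) hx
  | @cons x z y hxz w ih =>
    by_cases hzv : z = v
    · exact ⟨x, hzv ▸ hxz.symm, .refl hx⟩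
    have hz : z ∉ M := fun hzM => hw z (by simp) ⟨hzM, hzv⟩
    have hv' : v ∈ w.support :=
      (List.mem_cons.1 hv).resolve_left fun hvx => hx (hvx ▸ hvM)
    obtain ⟨a, hva, hza⟩ := ih (fun u hu => hw u (by simp [hu])) hz hv'
    exact ⟨a, hva, (hxz.reachableAvoiding hx hz).trans hza⟩

theorem reachableAvoiding_diff_singleton_iff (hx : x ∉ M) (hy : y ∉ M) (hv : v ∈ M) :
    ReachableAvoiding G (M \ {v}) x y ↔ ReachableAvoiding G M x y ∨
      ∃ a b, G.Adj v a ∧ G.Adj v b ∧ ReachableAvoiding G M x a ∧ ReachableAvoiding G M y b := by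
  constructor
  · intro h
    obtain ⟨w, hw⟩ := reachableAvoiding_iff_exists_walk.1 h
    by_cases hvw : v ∈ w.support
    · obtain ⟨a, hva, hxa⟩ := w.exists_adj_reachableAvoiding_of_mem_support hw hx hv hvw
      obtain ⟨b, hvb, hyb⟩ := w.reverse.exists_adj_reachableAvoiding_of_mem_support
        (fun z hz => hw z (by simpa using hz)) hy hv (by simpa using hvw)
      exact .inr ⟨a, b, hva, hvb, hxa, hyb⟩
    · refine .inl (reachableAvoiding_iff_exists_walk.2 ⟨w, fun z hz hzM => ?_⟩)
      exact hw z hz ⟨hzM, fun hzv => hvw (hzv ▸ hz)⟩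
  · rintro (h | ⟨a, b, hva, hvb, hxa, hyb⟩)
    · exact h.mono sdiff_subset
    have hvM : v ∉ M \ {v} := fun h => h.2 rfl
    have hav := hva.symm.reachableAvoiding (hxa.2.1 <| mem_of_mem_sdiff ·) hvM
    have hvb := hvb.reachableAvoiding hvM (hyb.2.1 <| mem_of_mem_sdiff ·)
    exact ((hxa.mono sdiff_subset).trans hav).trans (hvb.trans (hyb.mono sdiff_subset).symm)

end ReachableAvoiding

section NodeMultiwayCut

variable {G : SimpleGraph V} {T M C : Set V} {x y : V}

theorem IsNodeMultiwayCut.notMem (hM : IsNodeMultiwayCut G T M) (hx : x ∈ T) : x ∉ M :=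
  fun hxM => hM.1 hxM hx

theorem isMinNodeMultiwayCut_iff (hM : IsNodeMultiwayCut G T M) :
    IsMinNodeMultiwayCut G T M ↔ ∀ v ∈ M, ∃ x ∈ T, ∃ y ∈ T, x ≠ y ∧ ∃ a b, G.Adj v a ∧
      G.Adj v b ∧ ReachableAvoiding G M x a ∧ ReachableAvoiding G M y b := by
  constructor
  · rintro ⟨-, hmin⟩ v hv
    obtain ⟨x, hx, y, hy, hxy, hjoin⟩ :
        ∃ x ∈ T, ∃ y ∈ T, x ≠ y ∧ ReachableAvoiding G (M \ {v}) x y := by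
      have hcut := hmin _ (sdiff_singleton_ssubset.2 hv)
      simp only [IsNodeMultiwayCut, sepSets_iff_not_reachableAvoiding, not_and, not_forall,
        not_not, exists_prop] at hcut
      exact hcut fun z hz => hM.1 hz.1
    refine ⟨x, hx, y, hy, hxy, ?_⟩
    refine ((reachableAvoiding_diff_singleton_iff (hM.notMem hx) (hM.notMem hy) hv).1
      hjoin).resolve_left ?_
    exact sepSets_iff_not_reachableAvoiding.1 (hM.2 x hx y hy hxy)
  · refine fun h => ⟨hM, fun M' hM' hM'cut => ?_⟩
    obtain ⟨v, hvM, hvM'⟩ := exists_of_ssubset hM'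
    obtain ⟨x, hx, y, hy, hxy, hadj⟩ := h v hvM
    have hjoin := (reachableAvoiding_diff_singleton_iff (hM.notMem hx) (hM.notMem hy) hvM).2
      (.inr hadj)
    exact sepSets_iff_not_reachableAvoiding.1 (hM'cut.2 x hx y hy hxy)
      (hjoin.mono (subset_sdiff_singleton hM'.1 hvM'))

theorem IsCompOf.reachableAvoiding (hC : IsCompOf G M C) (hx : x ∈ C) (hy : y ∈ C) :
    ReachableAvoiding G M x y := by
  obtain ⟨c, rfl⟩ := hC
  obtain ⟨x, hx, rfl⟩ := hx
  obtain ⟨y, hy, rfl⟩ := hy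
  exact ⟨x.2, y.2, c.reachable_of_mem_supp hx hy⟩

theorem exists_isCompOf_forall_mem_iff (hx : x ∉ M) :
    ∃ C, IsCompOf G M C ∧ ∀ y, y ∈ C ↔ ReachableAvoiding G M x y := by
  refine ⟨_, ⟨G.induce Mᶜ |>.connectedComponentMk ⟨x, hx⟩, rfl⟩, fun y => ⟨?_, ?_⟩⟩
  · rintro ⟨y, hy, rfl⟩
    exact ⟨hx, y.2, ConnectedComponent.exact ((ConnectedComponent.mem_supp_iff _ _).1 hy).symm⟩
  · rintro ⟨_, hy, hxy⟩
    exact ⟨⟨y, hy⟩, (ConnectedComponent.mem_supp_iff _ _).2 (ConnectedComponent.sound hxy.symm),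
      rfl⟩

end NodeMultiwayCut

/-- A node multiway cut `M` of `(G, T)`, `T = {t₁, …, t_k}`, is minimal if
and only if there are `k` connected components `C₁, …, C_k` of `G - M` such that
(1) `t_i ∈ C_i` for each `i`, and (2) every `v ∈ M` has neighbors in `C_i` and `C_j` for
some pair of indices `i < j`. -/
theorem minimal_node_multiway_cut_iff (G : SimpleGraph V) (k : ℕ) (t : Fin k → V)
    (ht : Function.Injective t) (M : Set V)
    (hM : IsNodeMultiwayCut G (Set.range t) M) :
    IsMinNodeMultiwayCut G (Set.range t) M ↔
      ∃ C : Fin k → Set V,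
        (∀ i, IsCompOf G M (C i) ∧ t i ∈ C i) ∧
        (∀ v ∈ M, ∃ i j : Fin k, i < j ∧
          (∃ u ∈ C i, G.Adj v u) ∧ (∃ u ∈ C j, G.Adj v u)) := by
  have htM (i : Fin k) : t i ∉ M := hM.notMem (mem_range_self i)
  rw [isMinNodeMultiwayCut_iff hM]
  constructor
  · intro h
    choose C hC hmemC using fun i => exists_isCompOf_forall_mem_iff (G := G) (htM i)
    refine ⟨C, fun i => ⟨hC i, (hmemC i _).2 (.refl (htM i))⟩, fun v hv => ?_⟩
    obtain ⟨_, ⟨i, rfl⟩, _, ⟨j, rfl⟩, hij, a, b, hva, hvb, ha, hb⟩ := h v hv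
    have hai : ∃ u ∈ C i, G.Adj v u := ⟨a, (hmemC i a).2 ha, hva⟩
    have hbj : ∃ u ∈ C j, G.Adj v u := ⟨b, (hmemC j b).2 hb, hvb⟩
    rcases lt_or_gt_of_ne (ne_of_apply_ne t hij) with hlt | hlt
    exacts [⟨i, j, hlt, hai, hbj⟩, ⟨j, i, hlt, hbj, hai⟩]
  · rintro ⟨C, hC, hadj⟩ v hv
    obtain ⟨i, j, hij, ⟨a, ha, hva⟩, ⟨b, hb, hvb⟩⟩ := hadj v hv
    exact ⟨t i, mem_range_self i, t j, mem_range_self j, ht.ne hij.ne, a, b, hva, hvb,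
      (hC i).1.reachableAvoiding (hC i).2 ha, (hC j).1.reachableAvoiding (hC j).2 hb⟩
end

section
/- Define the root partition P_R = {C^r_1,…,C^r_k} by letting C^r_i be the connected component containing t_i in G − (C^r_1 ∪ ⋯ ∪ C^r_{i−1} ∪ {t_{i+1},…,t_k}). Then the edge set R of edges crossing between distinct blocks of P_R is a minimal edge multiway cut of (G,T); in particular P_R is a partition of V into k connected blocks with t_i ∈ C^r_i. -/
open SimpleGraph Set

variable {V : Type*}

/-- `M` is an edge multiway cut of `(G, T)`: a set of edges of `G` whose removal
disconnects every pair of distinct terminals. -/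
def IsEdgeMultiwayCut (G : SimpleGraph V) (T : Set V) (M : Set (Sym2 V)) : Prop :=
  M ⊆ G.edgeSet ∧ ∀ s ∈ T, ∀ u ∈ T, s ≠ u → ¬ (G.deleteEdges M).Reachable s u

/-- `M` is a minimal edge multiway cut of `(G, T)`. -/
def IsMinEdgeMultiwayCut (G : SimpleGraph V) (T : Set V) (M : Set (Sym2 V)) : Prop :=
  IsEdgeMultiwayCut G T M ∧ ∀ M' ⊂ M, ¬ IsEdgeMultiwayCut G T M'

/-- `C` is (the vertex set of) a connected component of the graph `H`. -/
def IsComp (H : SimpleGraph V) (C : Set V) : Prop :=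
  ∃ c : H.ConnectedComponent, C = c.supp

/-- `Cr` is the root family: `Cr i` is the connected component containing `t i` of
`G − (Cr 0 ∪ ⋯ ∪ Cr (i-1) ∪ {t (i+1), …, t (k-1)})`. -/
def IsRootFamily {k : ℕ} (G : SimpleGraph V) (t : Fin k → V) (Cr : Fin k → Set V) : Prop :=
  ∀ i, IsCompOf G ((⋃ j < i, Cr j) ∪ (t '' {j | i < j})) (Cr i) ∧ t i ∈ Cr i

/-- The set of edges of `G` crossing between distinct blocks of the family `C`. -/
def crossEdges {k : ℕ} (G : SimpleGraph V) (C : Fin k → Set V) : Set (Sym2 V) :=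
  {e | ∃ a b : V, G.Adj a b ∧ e = s(a, b) ∧ ∀ i, ¬ (a ∈ C i ∧ b ∈ C i)}

/-!
Every block of the root family is a component of an induced subgraph, hence connected; the
earlier blocks are deleted before `Cr j` is grown, so the blocks are disjoint; and since every vertex
deleted when growing `Cr i` lies in some block, the union of the blocks is closed under adjacency
in the connected graph `G`, so they cover `V`. For any partition of `V` into connected blocks, one
terminal per block, the crossing edges form a minimal multiway cut: inside `G - R` every block is
connected and nothing leaves it, while restoring any crossing edge joins the terminals of its two
end blocks.
-/

open scoped Function

lemma SimpleGraph.Reachable.mem_of_adj_mem {H : SimpleGraph V} {S : Set V}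
    (hS : ∀ ⦃x y⦄, x ∈ S → H.Adj x y → y ∈ S) {a b : V} (h : H.Reachable a b) (ha : a ∈ S) :
    b ∈ S := by
  obtain ⟨p⟩ := h
  induction p with
  | nil => exact ha
  | cons hadj _ ih => exact ih (hS ha hadj)

section IsCompOf

variable {G : SimpleGraph V} {M C : Set V}

lemma IsCompOf.subset_compl (h : IsCompOf G M C) : C ⊆ Mᶜ := by
  obtain ⟨c, rfl⟩ := h
  rintro _ ⟨x, -, rfl⟩
  exact x.2

lemma IsCompOf.mem_of_adj (h : IsCompOf G M C) {x y : V} (hx : x ∈ C) (hxy : G.Adj x y)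
    (hy : y ∉ M) : y ∈ C := by
  obtain ⟨c, rfl⟩ := h
  obtain ⟨x, hx, rfl⟩ := hx
  exact ⟨⟨y, hy⟩, c.mem_supp_of_adj_mem_supp hx hxy, rfl⟩

lemma IsCompOf.induce_connected (h : IsCompOf G M C) : (G.induce C).Connected := by
  obtain ⟨c, rfl⟩ := h
  refine c.connected_toSimpleGraph.map ⟨fun x => ⟨x.1.1, x.1, x.2, rfl⟩, fun hxy => hxy⟩ ?_
  rintro ⟨_, x, hx, rfl⟩
  exact ⟨⟨x, hx⟩, rfl⟩

end IsCompOf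

section crossEdges

variable {k : ℕ} {G : SimpleGraph V} {C : Fin k → Set V}

lemma mk_mem_crossEdges_iff {a b : V} :
    s(a, b) ∈ crossEdges G C ↔ G.Adj a b ∧ ∀ i, ¬ (a ∈ C i ∧ b ∈ C i) := by
  constructor
  · rintro ⟨x, y, hxy, heq, hcross⟩
    rcases Sym2.eq_iff.mp heq with ⟨rfl, rfl⟩ | ⟨rfl, rfl⟩
    · exact ⟨hxy, hcross⟩
    · exact ⟨hxy.symm, fun i h => hcross i h.symm⟩
  · rintro ⟨hab, hcross⟩
    exact ⟨a, b, hab, rfl, hcross⟩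

lemma crossEdges_subset_edgeSet : crossEdges G C ⊆ G.edgeSet := by
  rintro _ ⟨a, b, hab, rfl, -⟩
  exact hab

lemma deleteEdges_crossEdges_adj {a b : V} :
    (G.deleteEdges (crossEdges G C)).Adj a b ↔ G.Adj a b ∧ ∃ i, a ∈ C i ∧ b ∈ C i := by
  rw [deleteEdges_adj, mk_mem_crossEdges_iff]
  exact and_congr_right fun hab => by simp [hab]

lemma reachable_deleteEdges_crossEdges {i : Fin k} (hC : (G.induce (C i)).Connected) {a b : V}
    (ha : a ∈ C i) (hb : b ∈ C i) : (G.deleteEdges (crossEdges G C)).Reachable a b := by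
  have hle : G.induce (C i) ≤ (G.deleteEdges (crossEdges G C)).induce (C i) :=
    fun x y hxy => deleteEdges_crossEdges_adj.mpr ⟨hxy, i, x.2, y.2⟩
  exact ((hC.mono hle).preconnected ⟨a, ha⟩ ⟨b, hb⟩).map (Embedding.induce (C i)).toHom

namespace IndexedPartition

variable (P : IndexedPartition C)
include P

lemma mem_of_reachable_deleteEdges_crossEdges {i : Fin k} {a b : V}
    (hab : (G.deleteEdges (crossEdges G C)).Reachable a b) (ha : a ∈ C i) : b ∈ C i := by
  refine hab.mem_of_adj_mem (fun x y hx hxy => ?_) ha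
  obtain ⟨-, j, hxj, hyj⟩ := deleteEdges_crossEdges_adj.mp hxy
  rwa [P.eq_of_mem hx hxj]

lemma isMinEdgeMultiwayCut_crossEdges (hC : ∀ i, (G.induce (C i)).Connected) {t : Fin k → V}
    (ht : ∀ i, t i ∈ C i) : IsMinEdgeMultiwayCut G (range t) (crossEdges G C) := by
  refine ⟨⟨crossEdges_subset_edgeSet, ?_⟩, ?_⟩
  · rintro _ ⟨i, rfl⟩ _ ⟨j, rfl⟩ hne hreach
    have htj : t j ∈ C i := P.mem_of_reachable_deleteEdges_crossEdges hreach (ht i)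
    exact hne (congrArg t (P.eq_of_mem htj (ht j)))
  · rintro M' hM' ⟨-, hcut⟩
    obtain ⟨e, heR, heM'⟩ := exists_of_ssubset hM'
    obtain ⟨a, b, hab, rfl, hcross⟩ := heR
    set i := P.index a
    set j := P.index b
    have hle : G.deleteEdges (crossEdges G C) ≤ G.deleteEdges M' := deleteEdges_anti hM'.subset
    have hta : (G.deleteEdges M').Reachable (t i) a :=
      (reachable_deleteEdges_crossEdges (hC i) (ht i) (P.mem_index a)).mono hle
    have hbt : (G.deleteEdges M').Reachable b (t j) :=
      (reachable_deleteEdges_crossEdges (hC j) (P.mem_index b) (ht j)).mono hle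
    have hab' : (G.deleteEdges M').Reachable a b := (deleteEdges_adj.mpr ⟨hab, heM'⟩).reachable
    have hij : i ≠ j := fun h => hcross i ⟨P.mem_index a, h ▸ P.mem_index b⟩
    have htij : t i ≠ t j := fun h => hij (P.eq_of_mem (ht i) (h ▸ ht j))
    exact hcut _ ⟨i, rfl⟩ _ ⟨j, rfl⟩ htij (hta.trans (hab'.trans hbt))

end IndexedPartition

end crossEdges

namespace IsRootFamily

variable {k : ℕ} {G : SimpleGraph V} {t : Fin k → V} {Cr : Fin k → Set V}

lemma pairwise_disjoint (h : IsRootFamily G t Cr) : Pairwise (Disjoint on Cr) :=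
  (pairwise_disjoint_on Cr).mpr fun _ j hij => disjoint_left.mpr fun _ hvi hvj =>
    (h j).1.subset_compl hvj (Or.inl (mem_biUnion hij hvi))

lemma subset_iUnion (h : IsRootFamily G t Cr) (i : Fin k) :
    (⋃ j < i, Cr j) ∪ t '' {j | i < j} ⊆ ⋃ j, Cr j := by
  rintro v (hv | ⟨j, -, rfl⟩)
  · obtain ⟨j, -, hj⟩ := mem_iUnion₂.mp hv
    exact mem_iUnion_of_mem j hj
  · exact mem_iUnion_of_mem j (h j).2

lemma iUnion_eq_univ (h : IsRootFamily G t Cr) (hG : G.Connected) (hk : 0 < k) :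
    ⋃ i, Cr i = univ := by
  refine eq_univ_of_forall fun v =>
    (hG.preconnected (t ⟨0, hk⟩) v).mem_of_adj_mem ?_ (mem_iUnion_of_mem _ (h _).2)
  intro x y hx hxy
  obtain ⟨i, hxi⟩ := mem_iUnion.mp hx
  by_cases hy : y ∈ (⋃ j < i, Cr j) ∪ t '' {j | i < j}
  · exact h.subset_iUnion i hy
  · exact mem_iUnion_of_mem i ((h i).1.mem_of_adj hxi hxy hy)

noncomputable def indexedPartition (h : IsRootFamily G t Cr) (hG : G.Connected) (hk : 0 < k) :
    IndexedPartition Cr :=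
  .mk' Cr h.pairwise_disjoint (fun i => ⟨t i, (h i).2⟩)
    (fun v => mem_iUnion.mp (h.iUnion_eq_univ hG hk ▸ mem_univ v))

end IsRootFamily

theorem root_is_minimal_edge_multiway_cut_general (G : SimpleGraph V) (hconn : G.Connected)
    (k : ℕ) (hk : 0 < k) (t : Fin k → V)
    (Cr : Fin k → Set V) (hCr : IsRootFamily G t Cr) :
    IsMinEdgeMultiwayCut G (Set.range t) (crossEdges G Cr) ∧
    (∀ v : V, ∃! i : Fin k, v ∈ Cr i) ∧
    (∀ i, t i ∈ Cr i) ∧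
    (∀ i, (G.induce (Cr i)).Connected) := by
  let P := hCr.indexedPartition hconn hk
  have hti : ∀ i, t i ∈ Cr i := fun i => (hCr i).2
  have hconnCr : ∀ i, (G.induce (Cr i)).Connected := fun i => (hCr i).1.induce_connected
  refine ⟨P.isMinEdgeMultiwayCut_crossEdges hconnCr hti, fun v => ?_, hti, hconnCr⟩
  exact ⟨P.index v, P.mem_index v, fun j hj => P.eq_of_mem hj (P.mem_index v)⟩

/-- The root family `Cr` is a partition of `V` into `k` connected blocks
with `t i ∈ Cr i`, and the set `R` of edges crossing between distinct blocks of `Cr` is a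
minimal edge multiway cut of `(G, T)`. -/
theorem root_is_minimal_edge_multiway_cut (G : SimpleGraph V) (hconn : G.Connected)
    (k : ℕ) (hk : 0 < k) (t : Fin k → V) (ht : Function.Injective t)
    (Cr : Fin k → Set V) (hCr : IsRootFamily G t Cr) :
    IsMinEdgeMultiwayCut G (Set.range t) (crossEdges G Cr) ∧
    (∀ v : V, ∃! i : Fin k, v ∈ Cr i) ∧
    (∀ i, t i ∈ Cr i) ∧
    (∀ i, (G.induce (Cr i)).Connected) :=
  root_is_minimal_edge_multiway_cut_general G hconn k hk t Cr hCr
end
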